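/- arXiv:2602.16463 — 3 statements merged into one kernel-verified Lean document; each statement's English description precedes it below -/
import Mathlib

section
/- Under the conditions of the previous setup, the mean squared error of the submodel estimator can be written as mse_S = (σ²/n){x0ᵀ Σ_n⁻¹ x0 + n(ω_Sᵀ β_{Sc})²/σ² − ω_Sᵀ Q_S ω_S}, where Q_S = (Σ11,S − Σ10,S Σ00,S⁻¹ Σ01,S)⁻¹. -/
open Matrix MeasureTheory ProbabilityTheory

/-!
The estimator is linear in the responses: `x_{0,S}ᵀ β̂_S = wᵀ y` with
`w = n⁻¹ X_S Σ00,S⁻¹ x_{0,S}`. Since `X_Sᵀ w = x_{0,S}` and `X_Scᵀ w = Σ10,S Σ00,S⁻¹ x_{0,S}`,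
the error is `ω_Sᵀ β_{Sc} + wᵀ ε`, so the mean squared error is `(ω_Sᵀ β_{Sc})² + σ² ‖w‖²` with
`‖w‖² = n⁻¹ x_{0,S}ᵀ Σ00,S⁻¹ x_{0,S}`. The block-inverse formula for `Σ_n` rewrites this
quadratic form as `x0ᵀ Σ_n⁻¹ x0 − ω_Sᵀ Q_S ω_S`.
-/

theorem integral_sq_const_add_dotProduct {ι Ω : Type*} [Fintype ι] [MeasurableSpace Ω]
    {P : Measure Ω} [IsProbabilityMeasure P] {ε : ι → Ω → ℝ} {σ : ℝ}
    (hL2 : ∀ i, MemLp (ε i) 2 P) (hindep : Pairwise fun i j => ε i ⟂ᵢ[P] ε j)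
    (hmean : ∀ i, ∫ ω, ε i ω ∂P = 0) (hvar : ∀ i, ∫ ω, ε i ω ^ 2 ∂P = σ ^ 2)
    (c : ℝ) (a : ι → ℝ) :
    ∫ ω, (c + a ⬝ᵥ fun i => ε i ω) ^ 2 ∂P = c ^ 2 + σ ^ 2 * (a ⬝ᵥ a) := by
  set X : ι → Ω → ℝ := fun i ω => a i * ε i ω
  have hX : ∀ i, MemLp (X i) 2 P := fun i => (hL2 i).const_mul (a i)
  have hsum : MemLp (∑ i, X i) 2 P := memLp_finsetSum' _ fun i _ => hX i
  have hZ : ∀ ω, c + (a ⬝ᵥ fun i => ε i ω) = c + (∑ i, X i) ω := fun ω => by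
    simp [X, dotProduct]
  have hmeanZ : ∫ ω, c + (∑ i, X i) ω ∂P = c := by
    rw [integral_add (integrable_const c) (hsum.integrable one_le_two)]
    simp [X, integral_finsetSum _ fun i _ => (hX i).integrable one_le_two, integral_const_mul,
      hmean]
  have hvarX : ∀ i, Var[X i; P] = a i ^ 2 * σ ^ 2 := fun i => by
    rw [variance_const_mul, variance_eq_sub (hL2 i)]
    simp [hmean, hvar]
  have hvarZ : Var[fun ω => c + (∑ i, X i) ω; P] = σ ^ 2 * (a ⬝ᵥ a) := by
    rw [variance_const_add hsum.aestronglyMeasurable,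
      IndepFun.variance_sum (fun i _ => hX i) fun i _ j _ hij =>
        (hindep hij).comp (measurable_const_mul (a i)) (measurable_const_mul (a j))]
    simp [hvarX, dotProduct, Finset.mul_sum, sq, mul_comm, mul_left_comm]
  have hsq := hvarZ.symm.trans (variance_eq_sub ((memLp_const c).add hsum))
  simp only [Pi.pow_apply, hmeanZ] at hsq
  simp_rw [hZ]
  linarith

namespace Matrix

theorem sumElim_dotProduct_fromBlocks_inv_mulVec {R m n : Type*} [CommRing R] [Fintype m]
    [Fintype n] [DecidableEq m] [DecidableEq n] {A : Matrix m m R} (C : Matrix n m R)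
    (D : Matrix n n R) (hA : A.IsSymm) (hAu : IsUnit A.det)
    (hS : IsUnit (D - C * A⁻¹ * Cᵀ).det) (u : m → R) (v : n → R) :
    Sum.elim u v ⬝ᵥ (fromBlocks A Cᵀ C D)⁻¹ *ᵥ Sum.elim u v
      = u ⬝ᵥ A⁻¹ *ᵥ u
        + (C *ᵥ A⁻¹ *ᵥ u - v) ⬝ᵥ (D - C * A⁻¹ * Cᵀ)⁻¹ *ᵥ (C *ᵥ A⁻¹ *ᵥ u - v) := by
  let := A.invertibleOfIsUnitDet hAu
  let : Invertible (D - C * ⅟A * Cᵀ) := by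
    rw [invOf_eq_nonsing_inv]; exact invertibleOfIsUnitDet _ hS
  let := fromBlocks₁₁Invertible A Cᵀ C D
  set Q := (D - C * A⁻¹ * Cᵀ)⁻¹
  have hinv : (fromBlocks A Cᵀ C D)⁻¹ = fromBlocks (A⁻¹ + A⁻¹ * Cᵀ * Q * C * A⁻¹)
      (-(A⁻¹ * Cᵀ * Q)) (-(Q * C * A⁻¹)) Q := by
    rw [← invOf_eq_nonsing_inv, invOf_fromBlocks₁₁_eq]
    simp only [invOf_eq_nonsing_inv, Q]
  have hadj : ∀ w, u ⬝ᵥ A⁻¹ *ᵥ Cᵀ *ᵥ w = (C *ᵥ A⁻¹ *ᵥ u) ⬝ᵥ w := fun w => by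
    rw [dotProduct_mulVec, ← mulVec_transpose, hA.inv.eq, dotProduct_mulVec, vecMul_transpose]
  rw [hinv, fromBlocks_mulVec, sumElim_dotProduct_sumElim]
  simp only [Sum.elim_comp_inl, Sum.elim_comp_inr, add_mulVec, neg_mulVec, ← mulVec_mulVec,
    dotProduct_add, dotProduct_neg, hadj, mulVec_sub, sub_dotProduct, dotProduct_sub]
  ring

variable {ι α γ : Type*} [Fintype ι] {A : Matrix ι α ℝ} {c : ℝ} {G : Matrix α α ℝ}

theorem isSymm_of_eq_smul_transpose_mul_self (hG : G = c • (Aᵀ * A)) : G.IsSymm := by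
  rw [hG]
  exact IsSymm.smul (by rw [IsSymm, transpose_mul, transpose_transpose]) c

variable [Fintype α]

theorem transpose_mulVec_smul_mulVec (A : Matrix ι α ℝ) (B : Matrix ι γ ℝ) (c : ℝ)
    (v : α → ℝ) : Bᵀ *ᵥ (c • A *ᵥ v) = (c • (Bᵀ * A)) *ᵥ v := by
  rw [mulVec_smul, mulVec_mulVec, smul_mulVec]

variable [DecidableEq α]

theorem dotProduct_inv_mulVec_smul_transpose_mulVec (hG : G = c • (Aᵀ * A)) (z : α → ℝ)
    (y : ι → ℝ) : z ⬝ᵥ G⁻¹ *ᵥ (c • Aᵀ *ᵥ y) = (c • A *ᵥ G⁻¹ *ᵥ z) ⬝ᵥ y := by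
  rw [mulVec_smul, dotProduct_smul, smul_dotProduct, dotProduct_mulVec, ← mulVec_transpose,
    (isSymm_of_eq_smul_transpose_mul_self hG).inv.eq, dotProduct_mulVec, vecMul_transpose]

theorem smul_mulVec_inv_mulVec_dotProduct_self (hG : G = c • (Aᵀ * A)) (hGu : IsUnit G.det)
    (z : α → ℝ) :
    (c • A *ᵥ G⁻¹ *ᵥ z) ⬝ᵥ (c • A *ᵥ G⁻¹ *ᵥ z) = c * (z ⬝ᵥ G⁻¹ *ᵥ z) := by
  rw [← dotProduct_inv_mulVec_smul_transpose_mulVec hG, transpose_mulVec_smul_mulVec, ← hG,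
    mulVec_mulVec z G, mul_nonsing_inv _ hGu, one_mulVec, mulVec_smul, dotProduct_smul,
    smul_eq_mul, dotProduct_comm]

variable [Fintype γ]

theorem dotProduct_inv_mulVec_sub_sumElim_dotProduct {B : Matrix ι γ ℝ} {C : Matrix γ α ℝ}
    (hG : G = c • (Aᵀ * A)) (hC : C = c • (Bᵀ * A)) (hGu : IsUnit G.det)
    (z : α → ℝ) (z' : γ → ℝ) (b : α → ℝ) (b' : γ → ℝ) (e : ι → ℝ) :
    z ⬝ᵥ G⁻¹ *ᵥ (c • Aᵀ *ᵥ (fromCols A B *ᵥ Sum.elim b b' + e)) - Sum.elim z z' ⬝ᵥ Sum.elim b b'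
      = (C *ᵥ G⁻¹ *ᵥ z - z') ⬝ᵥ b' + (c • A *ᵥ G⁻¹ *ᵥ z) ⬝ᵥ e := by
  have hA : Aᵀ *ᵥ (c • A *ᵥ G⁻¹ *ᵥ z) = z := by
    rw [transpose_mulVec_smul_mulVec, ← hG, mulVec_mulVec, mul_nonsing_inv _ hGu, one_mulVec]
  have hB : Bᵀ *ᵥ (c • A *ᵥ G⁻¹ *ᵥ z) = C *ᵥ G⁻¹ *ᵥ z := by
    rw [transpose_mulVec_smul_mulVec, ← hC]
  rw [dotProduct_inv_mulVec_smul_transpose_mulVec hG, fromCols_mulVec_sumElim, dotProduct_add,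
    dotProduct_add, dotProduct_mulVec, dotProduct_mulVec, ← mulVec_transpose, ← mulVec_transpose,
    hA, hB, sumElim_dotProduct_sumElim, sub_dotProduct]
  ring

end Matrix

theorem submodel_estimator_mse_schur_form_general
    {α γ : Type*} [Fintype α] [Fintype γ] [DecidableEq α] [DecidableEq γ]
    {Ω : Type*} [MeasureSpace Ω] (P : Measure Ω) [IsProbabilityMeasure P]
    (n : ℕ) (hn : 0 < n)
    (x : Fin n → (α ⊕ γ) → ℝ) (βv : (α ⊕ γ) → ℝ)
    (βSc : γ → ℝ) (hβSc : βSc = fun c => βv (Sum.inr c))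
    (σ : ℝ) (hσ : 0 < σ)
    (ε : Fin n → Ω → ℝ)
    (hL2 : ∀ i, MemLp (ε i) 2 P)
    (hindep : iIndepFun ε P)
    (hmean : ∀ i, ∫ ω, ε i ω ∂P = 0)
    (hvar : ∀ i, ∫ ω, (ε i ω) ^ 2 ∂P = σ ^ 2)
    (y : Fin n → Ω → ℝ) (hy : ∀ i ω, y i ω = x i ⬝ᵥ βv + ε i ω)
    (S00 : Matrix α α ℝ)
    (hS00 : S00 = Matrix.of fun a b => (n : ℝ)⁻¹ * ∑ i, x i (Sum.inl a) * x i (Sum.inl b))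
    (S10 : Matrix γ α ℝ)
    (hS10 : S10 = Matrix.of fun c a => (n : ℝ)⁻¹ * ∑ i, x i (Sum.inr c) * x i (Sum.inl a))
    (h00 : IsUnit S00.det)
    (βhatS : Ω → α → ℝ)
    (hβhat : ∀ ω, βhatS ω
      = S00⁻¹.mulVec (fun a => (n : ℝ)⁻¹ * ∑ i, x i (Sum.inl a) * y i ω))
    (x0 : (α ⊕ γ) → ℝ) (x0S : α → ℝ) (x0Sc : γ → ℝ)
    (hx0S : x0S = fun a => x0 (Sum.inl a)) (hx0Sc : x0Sc = fun c => x0 (Sum.inr c))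
    (ωS : γ → ℝ) (hωS : ωS = S10.mulVec (S00⁻¹.mulVec x0S) - x0Sc)
    (μhatS : Ω → ℝ) (hμhat : ∀ ω, μhatS ω = x0S ⬝ᵥ βhatS ω)
    (μ : ℝ) (hμ : μ = x0 ⬝ᵥ βv)
    (S01 : Matrix α γ ℝ) (hS01 : S01 = S10ᵀ)
    (S11 : Matrix γ γ ℝ)
    (Sg : Matrix (α ⊕ γ) (α ⊕ γ) ℝ)
    (hSg : Sg = Matrix.fromBlocks S00 S01 S10 S11)
    (Q : Matrix γ γ ℝ) (hQ : Q = (S11 - S10 * S00⁻¹ * S01)⁻¹)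
    (hschur : (S11 - S10 * S00⁻¹ * S01).PosDef) :
    ∫ ω, (μhatS ω - μ) ^ 2 ∂P
      = σ ^ 2 / n * (x0 ⬝ᵥ Sg⁻¹.mulVec x0
          + n * (ωS ⬝ᵥ βSc) ^ 2 / σ ^ 2 - ωS ⬝ᵥ Q.mulVec ωS) := by
  set XS : Matrix (Fin n) α ℝ := (of x).toCols₁
  set XSc : Matrix (Fin n) γ ℝ := (of x).toCols₂
  have hG : S00 = (n : ℝ)⁻¹ • (XSᵀ * XS) := by
    rw [hS00]; ext; simp [XS, mul_apply, Finset.mul_sum]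
  have hC : S10 = (n : ℝ)⁻¹ • (XScᵀ * XS) := by
    rw [hS10]; ext; simp [XS, XSc, mul_apply, Finset.mul_sum]
  have hx0 : x0 = Sum.elim x0S x0Sc := by
    rw [hx0S, hx0Sc]; exact (Sum.elim_comp_inl_inr x0).symm
  have hβ : βv = Sum.elim (fun a => βv (Sum.inl a)) βSc := by
    rw [hβSc]; exact (Sum.elim_comp_inl_inr βv).symm
  have herr : ∀ ω, μhatS ω - μ
      = ωS ⬝ᵥ βSc + ((n : ℝ)⁻¹ • XS *ᵥ S00⁻¹ *ᵥ x0S) ⬝ᵥ fun i => ε i ω := fun ω => by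
    have hXy : (fun a => (n : ℝ)⁻¹ * ∑ i, x i (Sum.inl a) * y i ω)
        = (n : ℝ)⁻¹ • XSᵀ *ᵥ (fromCols XS XSc *ᵥ βv + fun i => ε i ω) := by
      ext; simp [XS, XSc, hy, mulVec, dotProduct, Finset.mul_sum]
    rw [hμhat, hβhat, hXy, hμ, hx0, hβ, dotProduct_inv_mulVec_sub_sumElim_dotProduct hG hC h00,
      hωS]
  subst hS01
  simp_rw [herr]
  rw [integral_sq_const_add_dotProduct hL2 (fun _ _ => hindep.indepFun) hmean hvar,
    smul_mulVec_inv_mulVec_dotProduct_self hG h00, hSg, hx0,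
    sumElim_dotProduct_fromBlocks_inv_mulVec S10 S11 (isSymm_of_eq_smul_transpose_mul_self hG)
      h00 hschur.det_pos.ne'.isUnit, ← hQ, ← hωS]
  field_simp
  ring

/-- In the linear regression model with i.i.d. mean-zero variance-`σ²` errors,
the mean squared error of `μ̂_S = x_{0,S}ᵀ β̂_S` as an estimator of `μ = x0ᵀ β`
can be written as
`(σ²/n){x0ᵀ Σ_n⁻¹ x0 + n (ω_Sᵀ β_{Sc})²/σ² − ω_Sᵀ Q_S ω_S}`,
where `Q_S` is the inverse Schur complement. -/
theorem submodel_estimator_mse_schur_form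
    {α γ : Type*} [Fintype α] [Fintype γ] [DecidableEq α] [DecidableEq γ]
    {Ω : Type*} [MeasureSpace Ω] (P : Measure Ω) [IsProbabilityMeasure P]
    (n : ℕ) (hn : 0 < n)
    (x : Fin n → (α ⊕ γ) → ℝ) (βv : (α ⊕ γ) → ℝ)
    (βSc : γ → ℝ) (hβSc : βSc = fun c => βv (Sum.inr c))
    (σ : ℝ) (hσ : 0 < σ)
    (ε : Fin n → Ω → ℝ)
    (hmeas : ∀ i, Measurable (ε i))
    (hL2 : ∀ i, MemLp (ε i) 2 P)
    (hindep : iIndepFun ε P)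
    (hident : ∀ i j, IdentDistrib (ε i) (ε j) P P)
    (hmean : ∀ i, ∫ ω, ε i ω ∂P = 0)
    (hvar : ∀ i, ∫ ω, (ε i ω) ^ 2 ∂P = σ ^ 2)
    (y : Fin n → Ω → ℝ) (hy : ∀ i ω, y i ω = x i ⬝ᵥ βv + ε i ω)
    (S00 : Matrix α α ℝ)
    (hS00 : S00 = Matrix.of fun a b => (n : ℝ)⁻¹ * ∑ i, x i (Sum.inl a) * x i (Sum.inl b))
    (S10 : Matrix γ α ℝ)
    (hS10 : S10 = Matrix.of fun c a => (n : ℝ)⁻¹ * ∑ i, x i (Sum.inr c) * x i (Sum.inl a))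
    (h00 : IsUnit S00.det)
    (βhatS : Ω → α → ℝ)
    (hβhat : ∀ ω, βhatS ω
      = S00⁻¹.mulVec (fun a => (n : ℝ)⁻¹ * ∑ i, x i (Sum.inl a) * y i ω))
    (x0 : (α ⊕ γ) → ℝ) (x0S : α → ℝ) (x0Sc : γ → ℝ)
    (hx0S : x0S = fun a => x0 (Sum.inl a)) (hx0Sc : x0Sc = fun c => x0 (Sum.inr c))
    (ωS : γ → ℝ) (hωS : ωS = S10.mulVec (S00⁻¹.mulVec x0S) - x0Sc)
    (μhatS : Ω → ℝ) (hμhat : ∀ ω, μhatS ω = x0S ⬝ᵥ βhatS ω)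
    (μ : ℝ) (hμ : μ = x0 ⬝ᵥ βv)
    (S01 : Matrix α γ ℝ) (hS01 : S01 = S10ᵀ)
    (S11 : Matrix γ γ ℝ)
    (hS11 : S11 = Matrix.of fun c d => (n : ℝ)⁻¹ * ∑ i, x i (Sum.inr c) * x i (Sum.inr d))
    (Sg : Matrix (α ⊕ γ) (α ⊕ γ) ℝ)
    (hSg : Sg = Matrix.fromBlocks S00 S01 S10 S11) (hpd : Sg.PosDef)
    (Q : Matrix γ γ ℝ) (hQ : Q = (S11 - S10 * S00⁻¹ * S01)⁻¹)
    (hschur : (S11 - S10 * S00⁻¹ * S01).PosDef) :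
    ∫ ω, (μhatS ω - μ) ^ 2 ∂P
      = σ ^ 2 / n * (x0 ⬝ᵥ Sg⁻¹.mulVec x0
          + n * (ωS ⬝ᵥ βSc) ^ 2 / σ ^ 2 - ωS ⬝ᵥ Q.mulVec ωS) :=
  submodel_estimator_mse_schur_form_general P n hn x βv βSc hβSc σ hσ ε hL2 hindep hmean hvar y hy
    S00 hS00 S10 hS10 h00 βhatS hβhat x0 x0S x0Sc hx0S hx0Sc ωS hωS μhatS hμhat μ hμ S01 hS01 S11 Sg
    hSg Q hQ hschur
end

section
/- The relative risk rr_S = mse_S/mse_wide satisfies the exact identity rr_S = 1 − (ω_Sᵀ Q_S ω_S / x0ᵀ Σ_n⁻¹ x0)(1 − κ_S²), where κ_S = √n ω_Sᵀβ_{Sc} / ((ω_SᵀQ_Sω_S)^{1/2} σ). -/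
open Matrix

/-- Exact identity for the relative risk:
`rr_S = mse_S/mse_wide = 1 − (ω_Sᵀ Q_S ω_S / x0ᵀ Σ_n⁻¹ x0)(1 − κ_S²)`, where
`κ_S = √n ω_Sᵀ β_{Sc} / ((ω_Sᵀ Q_S ω_S)^{1/2} σ)`, given the mse formulas and
the Schur identity `x0ᵀ Σ_n⁻¹ x0 = x_{0,S}ᵀ S00⁻¹ x_{0,S} + ω_Sᵀ Q_S ω_S`. -/
theorem relative_risk_kappa_identity
    {α γ ι : Type*} [Fintype α] [Fintype γ] [Fintype ι]
    (n : ℕ) (hn : 0 < n) (σ : ℝ) (hσ : 0 < σ)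
    (Sginv : Matrix ι ι ℝ) (S00inv : Matrix α α ℝ) (Q : Matrix γ γ ℝ)
    (x0 : ι → ℝ) (x0S : α → ℝ) (ωS : γ → ℝ) (βSc : γ → ℝ)
    (hpos : 0 < x0 ⬝ᵥ Sginv.mulVec x0)
    (hQpos : 0 < ωS ⬝ᵥ Q.mulVec ωS)
    (hschur : x0 ⬝ᵥ Sginv.mulVec x0
      = x0S ⬝ᵥ S00inv.mulVec x0S + ωS ⬝ᵥ Q.mulVec ωS)
    (mseS mseW : ℝ)
    (hmseS : mseS = σ ^ 2 / n * (x0S ⬝ᵥ S00inv.mulVec x0S) + (ωS ⬝ᵥ βSc) ^ 2)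
    (hmseW : mseW = σ ^ 2 / n * (x0 ⬝ᵥ Sginv.mulVec x0))
    (κS : ℝ)
    (hκ : κS = Real.sqrt n * (ωS ⬝ᵥ βSc) / (Real.sqrt (ωS ⬝ᵥ Q.mulVec ωS) * σ)) :
    mseS / mseW
      = 1 - (ωS ⬝ᵥ Q.mulVec ωS) / (x0 ⬝ᵥ Sginv.mulVec x0) * (1 - κS ^ 2) := by
  set X := x0 ⬝ᵥ Sginv.mulVec x0 with hX
  set Qv := ωS ⬝ᵥ Q.mulVec ωS with hQv
  set b := ωS ⬝ᵥ βSc with hb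
  have hXne : X ≠ 0 := ne_of_gt hpos
  have hQne : Qv ≠ 0 := ne_of_gt hQpos
  have hσne : σ ≠ 0 := ne_of_gt hσ
  have hnne : (n : ℝ) ≠ 0 := Nat.cast_ne_zero.mpr hn.ne'
  have hκ2 : κS ^ 2 = n * b ^ 2 / (Qv * σ ^ 2) := by
    rw [hκ, div_pow, mul_pow, mul_pow,
      Real.sq_sqrt (Nat.cast_nonneg n), Real.sq_sqrt hQpos.le]
  have h0S : x0S ⬝ᵥ S00inv.mulVec x0S = X - Qv := by linarith [hschur]
  rw [hmseS, hmseW, h0S, hκ2]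
  field_simp
  ring
end

section
/- The idealized Mallows statistic M_S⁰ = rss(S)/σ² − n + 2|S| satisfies E M_S⁰ = |S| + γ_S, where γ_S = n β_{Sc}ᵀ Q_S⁻¹ β_{Sc}/σ² and Q_S⁻¹ = Σ11,S − Σ10,SΣ00,S⁻¹Σ01,S is the Schur complement. -/
open Matrix MeasureTheory

/-! With `b = X_S β_S + X_{Sc} β_{Sc}` the mean of `y`, `E rss(S) = bᵀ(I − H_S)b + σ² tr(I − H_S)`.
Since `I − H_S` annihilates the columns of `X_S`, the quadratic form reduces to
`β_{Sc}ᵀ X_{Sc}ᵀ(I − H_S)X_{Sc} β_{Sc}`, and expanding `H_S` shows that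
`n⁻¹ X_{Sc}ᵀ(I − H_S)X_{Sc}` is exactly the Schur complement `Q_S⁻¹`. Finally
`tr H_S = tr((X_SᵀX_S)⁻¹X_SᵀX_S) = |S|`. -/

section SecondMoments

variable {Ω : Type*} [MeasurableSpace Ω] {P : Measure Ω} [IsProbabilityMeasure P]

lemma integral_div_sub_add {f : Ω → ℝ} (hf : Integrable f P) (a c d : ℝ) :
    ∫ ω, (f ω / a - c + d) ∂P = (∫ ω, f ω ∂P) / a - c + d := by
  have hdiv : Integrable (fun ω => f ω / a) P := hf.div_const a
  have hshift : Integrable (fun ω => f ω / a - c) P := hdiv.sub (integrable_const c)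
  rw [integral_add hshift (integrable_const d), integral_sub hdiv (integrable_const c),
    integral_div]
  simp

lemma integral_const_add_mul_const_add {f g : Ω → ℝ} (hf : MemLp f 2 P) (hg : MemLp g 2 P)
    (hf0 : ∫ ω, f ω ∂P = 0) (hg0 : ∫ ω, g ω ∂P = 0) (c d : ℝ) :
    ∫ ω, (c + f ω) * (d + g ω) ∂P = c * d + ∫ ω, f ω * g ω ∂P := by
  have hcg : Integrable (fun ω => c * g ω) P := (hg.integrable one_le_two).const_mul c
  have hdf : Integrable (fun ω => d * f ω) P := (hf.integrable one_le_two).const_mul d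
  have hlin : Integrable (fun ω => c * g ω + d * f ω) P := hcg.add hdf
  have hfg : Integrable (fun ω => f ω * g ω) P := hf.integrable_mul hg
  have hrest : Integrable (fun ω => c * g ω + d * f ω + f ω * g ω) P := hlin.add hfg
  have hexpand : ∀ ω, (c + f ω) * (d + g ω) = c * d + (c * g ω + d * f ω + f ω * g ω) :=
    fun ω => by ring
  simp_rw [hexpand]
  rw [integral_add (integrable_const _) hrest, integral_add hlin hfg, integral_add hcg hdf]
  simp [integral_const_mul, hf0, hg0]

variable {ι : Type*} (A : Matrix ι ι ℝ) (b : ι → ℝ) {ε : ι → Ω → ℝ}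

lemma integrable_const_add_mul_mul_const_add (hL2 : ∀ i, MemLp (ε i) 2 P) (i j : ι) :
    Integrable (fun ω => (b i + ε i ω) * A i j * (b j + ε j ω)) P := by
  have hmem : ∀ i, MemLp (fun ω => b i + ε i ω) 2 P := fun i => (memLp_const (b i)).add (hL2 i)
  exact (((hmem i).integrable_mul (hmem j)).mul_const (A i j)).congr
    (ae_of_all _ fun ω => by simp only [Pi.mul_apply]; ring)

variable [Fintype ι]

lemma integrable_dotProduct_mulVec_const_add (hL2 : ∀ i, MemLp (ε i) 2 P) :
    Integrable (fun ω => (fun i => b i + ε i ω) ⬝ᵥ A *ᵥ (fun i => b i + ε i ω)) P := by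
  simp_rw [dot_mulVec_eq_sum_sum]
  exact integrable_finsetSum _ fun j _ => integrable_finsetSum _ fun i _ =>
    integrable_const_add_mul_mul_const_add A b hL2 i j

lemma integral_dotProduct_mulVec_const_add (C : Matrix ι ι ℝ) (hL2 : ∀ i, MemLp (ε i) 2 P)
    (hmean : ∀ i, ∫ ω, ε i ω ∂P = 0) (hcov : ∀ i j, ∫ ω, ε i ω * ε j ω ∂P = C i j) :
    ∫ ω, (fun i => b i + ε i ω) ⬝ᵥ A *ᵥ (fun i => b i + ε i ω) ∂P
      = b ⬝ᵥ A *ᵥ b + (Aᵀ * C).trace := by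
  have hterm : ∀ i j, ∫ ω, (b i + ε i ω) * A i j * (b j + ε j ω) ∂P
      = b i * A i j * b j + A i j * C i j := fun i j => by
    simp_rw [mul_right_comm _ (A i j), integral_mul_const,
      integral_const_add_mul_const_add (hL2 i) (hL2 j) (hmean i) (hmean j), hcov]
    ring
  simp_rw [dot_mulVec_eq_sum_sum]
  rw [integral_finsetSum _ fun j _ => integrable_finsetSum _ fun i _ =>
    integrable_const_add_mul_mul_const_add A b hL2 i j]
  simp_rw [integral_finsetSum _ fun i _ => integrable_const_add_mul_mul_const_add A b hL2 i _,
    hterm, Finset.sum_add_distrib]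
  simp [Matrix.trace, mul_apply]

end SecondMoments

section HatMatrix

variable {R : Type*} [CommRing R] {m k : Type*} [Fintype m] [Fintype k] [DecidableEq k]
  (X : Matrix m k R)

noncomputable def hatMatrix : Matrix m m R := X * (Xᵀ * X)⁻¹ * Xᵀ

variable {X}

lemma trace_hatMatrix (hX : IsUnit (Xᵀ * X).det) : (hatMatrix X).trace = Fintype.card k := by
  rw [hatMatrix, Matrix.mul_assoc, trace_mul_comm, Matrix.mul_assoc, nonsing_inv_mul _ hX,
    trace_one]

variable [DecidableEq m]

lemma one_sub_hatMatrix_mul_self (hX : IsUnit (Xᵀ * X).det) : (1 - hatMatrix X) * X = 0 := by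
  rw [hatMatrix, Matrix.sub_mul, Matrix.one_mul, Matrix.mul_assoc _ Xᵀ, Matrix.mul_assoc X,
    nonsing_inv_mul _ hX, Matrix.mul_one, sub_self]

lemma transpose_mul_one_sub_hatMatrix (hX : IsUnit (Xᵀ * X).det) :
    Xᵀ * (1 - hatMatrix X) = 0 := by
  rw [hatMatrix, Matrix.mul_sub, Matrix.mul_one, ← Matrix.mul_assoc, ← Matrix.mul_assoc,
    mul_nonsing_inv _ hX, Matrix.one_mul, sub_self]

lemma dotProduct_one_sub_hatMatrix_mulVec_add {l : Type*} [Fintype l] (hX : IsUnit (Xᵀ * X).det)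
    (Z : Matrix m l R) (β : k → R) (γ : l → R) :
    (X *ᵥ β + Z *ᵥ γ) ⬝ᵥ (1 - hatMatrix X) *ᵥ (X *ᵥ β + Z *ᵥ γ)
      = γ ⬝ᵥ (Zᵀ * (1 - hatMatrix X) * Z) *ᵥ γ := by
  have hXβ : (1 - hatMatrix X) *ᵥ (X *ᵥ β) = 0 := by
    rw [mulVec_mulVec, one_sub_hatMatrix_mul_self hX, zero_mulVec]
  have hcross : X *ᵥ β ⬝ᵥ (1 - hatMatrix X) *ᵥ (Z *ᵥ γ) = 0 := by
    rw [dotProduct_comm, ← dotProduct_transpose_mulVec, mulVec_mulVec, mulVec_mulVec,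
      transpose_mul_one_sub_hatMatrix hX, Matrix.zero_mul, zero_mulVec, dotProduct_zero]
  rw [mulVec_add, hXβ, zero_add, add_dotProduct, hcross, zero_add, dotProduct_comm,
    ← dotProduct_transpose_mulVec, mulVec_mulVec, mulVec_mulVec, Matrix.mul_assoc]

end HatMatrix

lemma schur_complement_smul_gram {K : Type*} [Field K] {m k l : Type*} [Fintype m] [Fintype k]
    [DecidableEq m] [DecidableEq k] {X : Matrix m k K} (hX : IsUnit (Xᵀ * X).det)
    (Z : Matrix m l K) {c : K} (hc : c ≠ 0) :
    c • (Zᵀ * Z) - (c • (Xᵀ * Z))ᵀ * (c • (Xᵀ * X))⁻¹ * (c • (Xᵀ * Z))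
      = c • (Zᵀ * (1 - hatMatrix X) * Z) := by
  have hinv : (c • (Xᵀ * X))⁻¹ = c⁻¹ • (Xᵀ * X)⁻¹ := inv_smul' _ (Units.mk0 c hc) hX
  rw [hinv, hatMatrix, Matrix.mul_sub, Matrix.mul_one, Matrix.sub_mul, smul_sub]
  congr 1
  simp only [transpose_smul, transpose_mul, transpose_transpose, Matrix.smul_mul,
    Matrix.mul_smul, smul_smul, Matrix.mul_assoc]
  rw [inv_mul_cancel₀ hc, mul_one]

theorem mean_idealized_mallows_general
    {Ω : Type*} [MeasureSpace Ω] (P : Measure Ω) [IsProbabilityMeasure P]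
    (n k l : ℕ) (hn : 0 < n)
    (XS : Matrix (Fin n) (Fin k) ℝ) (hU : IsUnit (XSᵀ * XS).det)
    (XSc : Matrix (Fin n) (Fin l) ℝ)
    (βS : Fin k → ℝ) (βSc : Fin l → ℝ)
    (σ : ℝ) (hσ : 0 < σ)
    (ε : Fin n → Ω → ℝ)
    (hL2 : ∀ i, MemLp (ε i) 2 P)
    (hmean : ∀ i, ∫ ω, ε i ω ∂P = 0)
    (hcov : ∀ i j, ∫ ω, ε i ω * ε j ω ∂P = if i = j then σ ^ 2 else 0)
    (y : Ω → Fin n → ℝ)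
    (hy : ∀ ω i, y ω i = (XS.mulVec βS + XSc.mulVec βSc) i + ε i ω)
    (HS : Matrix (Fin n) (Fin n) ℝ)
    (hH : HS = XS * (XSᵀ * XS)⁻¹ * XSᵀ)
    (rss : Ω → ℝ) (hrss : ∀ ω, rss ω = y ω ⬝ᵥ (1 - HS).mulVec (y ω))
    (S00 : Matrix (Fin k) (Fin k) ℝ) (hS00 : S00 = (n : ℝ)⁻¹ • (XSᵀ * XS))
    (S01 : Matrix (Fin k) (Fin l) ℝ) (hS01 : S01 = (n : ℝ)⁻¹ • (XSᵀ * XSc))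
    (S10 : Matrix (Fin l) (Fin k) ℝ) (hS10 : S10 = S01ᵀ)
    (S11 : Matrix (Fin l) (Fin l) ℝ) (hS11 : S11 = (n : ℝ)⁻¹ • (XScᵀ * XSc))
    (QS : Matrix (Fin l) (Fin l) ℝ) (hQS : QS = (S11 - S10 * S00⁻¹ * S01)⁻¹)
    (hschurU : IsUnit (S11 - S10 * S00⁻¹ * S01).det)
    (M0 : Ω → ℝ) (hM0 : ∀ ω, M0 ω = rss ω / σ ^ 2 - n + 2 * k)
    (γS : ℝ) (hγS : γS = n * (βSc ⬝ᵥ QS⁻¹.mulVec βSc) / σ ^ 2) :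
    ∫ ω, M0 ω ∂P = k + γS := by
  have hn0 : (n : ℝ) ≠ 0 := Nat.cast_ne_zero.mpr hn.ne'
  obtain rfl : HS = hatMatrix XS := hH
  set b : Fin n → ℝ := XS *ᵥ βS + XSc *ᵥ βSc
  have hrss' : rss = fun ω => (fun i => b i + ε i ω) ⬝ᵥ (1 - hatMatrix XS) *ᵥ
      fun i => b i + ε i ω := by
    funext ω
    rw [hrss, show y ω = fun i => b i + ε i ω from funext (hy ω)]
  have hcov' : ∀ i j, ∫ ω, ε i ω * ε j ω ∂P = (σ ^ 2 • 1 : Matrix (Fin n) (Fin n) ℝ) i j := by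
    simp [hcov, one_apply]
  have hQS' : QS⁻¹ = (n : ℝ)⁻¹ • (XScᵀ * (1 - hatMatrix XS) * XSc) := by
    rw [hQS, nonsing_inv_nonsing_inv _ hschurU, hS11, hS10, hS01, hS00,
      schur_complement_smul_gram hU XSc (inv_ne_zero hn0)]
  have hErss : ∫ ω, rss ω ∂P = n * (βSc ⬝ᵥ QS⁻¹ *ᵥ βSc) + σ ^ 2 * (n - k) := by
    rw [hrss', integral_dotProduct_mulVec_const_add _ b _ hL2 hmean hcov',
      dotProduct_one_sub_hatMatrix_mulVec_add hU, Matrix.mul_smul, Matrix.mul_one, trace_smul,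
      trace_transpose, trace_sub, trace_one, trace_hatMatrix hU, hQS', smul_mulVec,
      dotProduct_smul]
    simp only [smul_eq_mul, Fintype.card_fin, mul_inv_cancel_left₀ hn0]
  have hrssint : Integrable rss P := hrss' ▸ integrable_dotProduct_mulVec_const_add _ b hL2
  calc ∫ ω, M0 ω ∂P = (∫ ω, rss ω ∂P) / σ ^ 2 - n + 2 * k := by
        simp_rw [hM0]
        exact integral_div_sub_add hrssint _ _ _
    _ = k + γS := by
        rw [hErss, hγS]
        field_simp
        ring

/-- The idealized Mallows statistic `M_S⁰ = rss(S)/σ² − n + 2|S|` satisfies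
`E M_S⁰ = |S| + γ_S` with `γ_S = n β_{Sc}ᵀ Q_S⁻¹ β_{Sc}/σ²`, where
`Q_S⁻¹ = S11 − S10 S00⁻¹ S01` is the Schur complement in `Σ_n = n⁻¹ XᵀX`. -/
theorem mean_idealized_mallows
    {Ω : Type*} [MeasureSpace Ω] (P : Measure Ω) [IsProbabilityMeasure P]
    (n k l : ℕ) (hn : 0 < n) (hk : k ≤ n)
    (XS : Matrix (Fin n) (Fin k) ℝ) (hU : IsUnit (XSᵀ * XS).det)
    (XSc : Matrix (Fin n) (Fin l) ℝ)
    (βS : Fin k → ℝ) (βSc : Fin l → ℝ)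
    (σ : ℝ) (hσ : 0 < σ)
    (ε : Fin n → Ω → ℝ)
    (hL2 : ∀ i, MemLp (ε i) 2 P)
    (hmean : ∀ i, ∫ ω, ε i ω ∂P = 0)
    (hcov : ∀ i j, ∫ ω, ε i ω * ε j ω ∂P = if i = j then σ ^ 2 else 0)
    (y : Ω → Fin n → ℝ)
    (hy : ∀ ω i, y ω i = (XS.mulVec βS + XSc.mulVec βSc) i + ε i ω)
    (HS : Matrix (Fin n) (Fin n) ℝ)
    (hH : HS = XS * (XSᵀ * XS)⁻¹ * XSᵀ)
    (rss : Ω → ℝ) (hrss : ∀ ω, rss ω = y ω ⬝ᵥ (1 - HS).mulVec (y ω))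
    (S00 : Matrix (Fin k) (Fin k) ℝ) (hS00 : S00 = (n : ℝ)⁻¹ • (XSᵀ * XS))
    (S01 : Matrix (Fin k) (Fin l) ℝ) (hS01 : S01 = (n : ℝ)⁻¹ • (XSᵀ * XSc))
    (S10 : Matrix (Fin l) (Fin k) ℝ) (hS10 : S10 = S01ᵀ)
    (S11 : Matrix (Fin l) (Fin l) ℝ) (hS11 : S11 = (n : ℝ)⁻¹ • (XScᵀ * XSc))
    (QS : Matrix (Fin l) (Fin l) ℝ) (hQS : QS = (S11 - S10 * S00⁻¹ * S01)⁻¹)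
    (hschurU : IsUnit (S11 - S10 * S00⁻¹ * S01).det)
    (M0 : Ω → ℝ) (hM0 : ∀ ω, M0 ω = rss ω / σ ^ 2 - n + 2 * k)
    (γS : ℝ) (hγS : γS = n * (βSc ⬝ᵥ QS⁻¹.mulVec βSc) / σ ^ 2) :
    ∫ ω, M0 ω ∂P = k + γS :=
  mean_idealized_mallows_general P n k l hn XS hU XSc βS βSc σ hσ ε hL2 hmean hcov y hy HS hH rss
    hrss S00 hS00 S01 hS01 S10 hS10 S11 hS11 QS hQS hschurU M0 hM0 γS hγS
end
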